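/- Let F : ℝ^n ⇒ ℝ^n be locally maximally monotone at (x̄, ȳ) ∈ gph F. Then F is graphically Lipschitzian of dimension n at (x̄, ȳ) with transformation mapping Φ(x, y) = (x + y, x), and consequently F has the SCD property around (x̄, ȳ). Moreover, for every (x, y) ∈ gph F sufficiently close to (x̄, ȳ) and every subspace L ∈ Sp F(x, y) there is a firmly nonexpansive n×n matrix B (i.e. ⟨Bv, v⟩ ≥ ‖Bv‖² for all v ∈ ℝ^n) such that L = rge(B, I − B) := {(Bp, (I − B)p) : p ∈ ℝ^n} and L* = rge(Bᵀ, I − Bᵀ). -/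

import Mathlib

open Filter Topology Metric Set
open scoped InnerProductSpace RealInnerProductSpace ENNReal NNReal

noncomputable section

namespace SCD

abbrev E (n : ℕ) := EuclideanSpace ℝ (Fin n)
abbrev E2 (n : ℕ) := WithLp 2 (E n × E n)

variable {n : ℕ}

def lp2 (n : ℕ) : E2 n ≃ₗ[ℝ] E n × E n := WithLp.linearEquiv 2 ℝ (E n × E n)
def mk2 (u v : E n) : E2 n := (lp2 n).symm (u, v)
def fst2 (z : E2 n) : E n := (lp2 n z).1
def snd2 (z : E2 n) : E n := (lp2 n z).2

instance : FiniteDimensional ℝ (E2 n) := Module.Finite.equiv (lp2 n).symm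

def tcone {H : Type*} [NormedAddCommGroup H] [NormedSpace ℝ H] (A : Set H) (z : H) : Set H :=
  {w | ∃ t : ℕ → ℝ, ∃ wk : ℕ → H, (∀ k, 0 < t k) ∧ Tendsto t atTop (𝓝 0) ∧
      Tendsto wk atTop (𝓝 w) ∧ ∀ k, z + t k • wk k ∈ A}

def gph (F : E n → Set (E n)) : Set (E2 n) := {z | snd2 z ∈ F (fst2 z)}
def projC (L : Submodule ℝ (E2 n)) : E2 n →L[ℝ] E2 n := L.subtypeL.comp (L.orthogonalProjectionOnto)
def dZ (L₁ L₂ : Submodule ℝ (E2 n)) : ℝ := ‖projC L₁ - projC L₂‖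

def Sneg (n : ℕ) : E2 n ≃ₗ[ℝ] E2 n :=
  (lp2 n).trans (((LinearEquiv.prodComm ℝ (E n) (E n)).trans
    ((LinearEquiv.neg ℝ).prodCongr (LinearEquiv.refl ℝ (E n)))).trans (lp2 n).symm)

def adjS (L : Submodule ℝ (E2 n)) : Submodule ℝ (E2 n) := Lᗮ.map (Sneg n).toLinearMap

/-- `O_F`: the set of points of `gph F` where `F` is graphically smooth of dimension `n`,
i.e. the tangent cone to the graph is an `n`-dimensional linear subspace. -/
def OF (F : E n → Set (E n)) : Set (E2 n) :=
  {z | z ∈ gph F ∧ ∃ L : Submodule ℝ (E2 n),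
    Module.finrank ℝ L = n ∧ (L : Set (E2 n)) = tcone (gph F) z}

/-- The primal generalized derivative `Sp F(x,y)`. -/
def Sp (F : E n → Set (E n)) (z : E2 n) : Set (Submodule ℝ (E2 n)) :=
  {L | Module.finrank ℝ L = n ∧ ∃ (zk : ℕ → E2 n) (Lk : ℕ → Submodule ℝ (E2 n)),
      (∀ k, zk k ∈ gph F ∧ Module.finrank ℝ (Lk k) = n ∧
        ((Lk k : Set (E2 n)) = tcone (gph F) (zk k))) ∧
      Tendsto zk atTop (𝓝 z) ∧ Tendsto (fun k => dZ (Lk k) L) atTop (𝓝 0)}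

/-- The dual generalized derivative `Sp* F(x,y)`. -/
def SpStar (F : E n → Set (E n)) (z : E2 n) : Set (Submodule ℝ (E2 n)) :=
  {L' | ∃ L ∈ Sp F z, L' = adjS L}

/-- `F` has the SCD property at `z ∈ gph F`. -/
def SCDAt (F : E n → Set (E n)) (z : E2 n) : Prop := (Sp F z).Nonempty

/-- `F` has the SCD property around `z ∈ gph F`. -/
def SCDAround (F : E n → Set (E n)) (z : E2 n) : Prop :=
  ∃ δ > (0 : ℝ), ∀ z' ∈ gph F, dist z' z < δ → SCDAt F z'

/-- `Z_n^{reg}`: the subspaces `L ∈ Z_n` such that `(y*, 0) ∈ L` implies `y* = 0`. -/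
def Znreg (n : ℕ) : Set (Submodule ℝ (E2 n)) :=
  {L | Module.finrank ℝ L = n ∧ ∀ y : E n, mk2 y 0 ∈ L → y = 0}

/-- `F` is SCD regular around `z ∈ gph F`. -/
def SCDRegularAround (F : E n → Set (E n)) (z : E2 n) : Prop :=
  SCDAround F z ∧ ∀ L ∈ SpStar F z, L ∈ Znreg n

/-- The set of values `‖y*‖` for `(y*, x*)` in some `L ∈ Sp* F(x,y)` with `‖x*‖ ≤ 1`;
its supremum is the modulus of SCD regularity. -/
def scdregSet (F : E n → Set (E n)) (z : E2 n) : Set ℝ :=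
  {r | ∃ L ∈ SpStar F z, ∃ w : E2 n, w ∈ L ∧ ‖snd2 w‖ ≤ 1 ∧ r = ‖fst2 w‖}

/-- The modulus of SCD regularity `scd reg F(x,y)`. -/
def scdreg (F : E n → Set (E n)) (z : E2 n) : ℝ := sSup (scdregSet F z)

/-- The graph of the outer limiting graphical derivative `D^♯F(x̄,ȳ)`. -/
def DsharpG (F : E n → Set (E n)) (z : E2 n) : Set (E2 n) :=
  {w | ∃ (zk : ℕ → E2 n) (wk : ℕ → E2 n),
    (∀ k, zk k ∈ gph F ∧ wk k ∈ tcone (gph F) (zk k)) ∧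
    Tendsto zk atTop (𝓝 z) ∧ Tendsto wk atTop (𝓝 w)}

/-- The regular (Fréchet) normal cone: the polar of the tangent cone. -/
def regN (A : Set (E2 n)) (z : E2 n) : Set (E2 n) := {w | ∀ v ∈ tcone A z, ⟪w, v⟫_ℝ ≤ 0}

/-- The limiting (Mordukhovich) normal cone. -/
def limN (A : Set (E2 n)) (z : E2 n) : Set (E2 n) :=
  {w | ∃ (zk wk : ℕ → E2 n), (∀ k, zk k ∈ A ∧ wk k ∈ regN A (zk k)) ∧
    Tendsto zk atTop (𝓝 z) ∧ Tendsto wk atTop (𝓝 w)}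

/-- The graph of the limiting coderivative: `(y*, x*)` with `(x*, -y*)` in the limiting
normal cone to the graph. -/
def coderivG (F : E n → Set (E n)) (z : E2 n) : Set (E2 n) :=
  {w | mk2 (snd2 w) (-(fst2 w)) ∈ limN (gph F) z}

/-- The graph of the strict (paratingent) derivative `D_*F(x̄,ȳ)`. -/
def paraconeG (F : E n → Set (E n)) (z : E2 n) : Set (E2 n) :=
  {w | ∃ (t : ℕ → ℝ) (z1 z2 : ℕ → E2 n), (∀ k, 0 < t k) ∧ Tendsto t atTop (𝓝 0) ∧
    (∀ k, z1 k ∈ gph F ∧ z2 k ∈ gph F) ∧ Tendsto z1 atTop (𝓝 z) ∧ Tendsto z2 atTop (𝓝 z) ∧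
    Tendsto (fun k => (t k)⁻¹ • (z2 k - z1 k)) atTop (𝓝 w)}

/-- The B-subdifferential of `f : U → ℝ^n` at `x`. -/
def Bsub (f : E n → E n) (U : Set (E n)) (x : E n) : Set (E n →L[ℝ] E n) :=
  {A | ∃ xk : ℕ → E n, (∀ k, xk k ∈ U ∧ DifferentiableAt ℝ f (xk k)) ∧
    Tendsto xk atTop (𝓝 x) ∧ Tendsto (fun k => fderiv ℝ f (xk k)) atTop (𝓝 A)}

/-- A single-valued map `f` on `U` viewed as a set-valued map. -/
def sv (f : E n → E n) (U : Set (E n)) : E n → Set (E n) := fun x => {y | x ∈ U ∧ y = f x}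

/-- The linear map `u ↦ (u, A u)`. -/
def graphMap (A : E n →L[ℝ] E n) : E n →ₗ[ℝ] E2 n :=
  (lp2 n).symm.toLinearMap.comp (LinearMap.prod LinearMap.id A.toLinearMap)

/-- The subspace `rge(I, A) = {(u, Au) : u ∈ ℝ^n}`. -/
def rgeIA (A : E n →L[ℝ] E n) : Submodule ℝ (E2 n) := LinearMap.range (graphMap A)

/-- The linear map `p ↦ (C p, p)`. -/
def graphMapRev (C : E n →L[ℝ] E n) : E n →ₗ[ℝ] E2 n :=
  (lp2 n).symm.toLinearMap.comp (LinearMap.prod C.toLinearMap LinearMap.id)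

/-- The subspace `rge(C, I) = {(C p, p) : p ∈ ℝ^n}`. -/
def rgeCI (C : E n →L[ℝ] E n) : Submodule ℝ (E2 n) := LinearMap.range (graphMapRev C)

/-- The preimage map `F^{-1}(y)`. -/
def Finv (F : E n → Set (E n)) (y : E n) : Set (E n) := {x | y ∈ F x}

/-- Metric subregularity at `z ∈ gph F` with constant `κ`. -/
def SubregWith (F : E n → Set (E n)) (z : E2 n) (κ : ℝ) : Prop :=
  ∃ δ > (0 : ℝ), ∀ x' : E n, dist x' (fst2 z) < δ →
    EMetric.infEdist x' (Finv F (snd2 z)) ≤ ENNReal.ofReal κ * EMetric.infEdist (snd2 z) (F x')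

/-- `F` is metrically subregular at `z ∈ gph F`. -/
def SubregAt (F : E n → Set (E n)) (z : E2 n) : Prop := ∃ κ, 0 ≤ κ ∧ SubregWith F z κ

/-- The modulus of metric subregularity `subreg F(x,y)`. -/
def subregMod (F : E n → Set (E n)) (z : E2 n) : ℝ := sInf {κ | 0 ≤ κ ∧ SubregWith F z κ}

/-- `F` is strongly metrically subregular at `z ∈ gph F`. -/
def StrSubregAt (F : E n → Set (E n)) (z : E2 n) : Prop :=
  SubregAt F z ∧ ∃ δ > (0 : ℝ), ∀ x' ∈ Finv F (snd2 z), dist x' (fst2 z) < δ → x' = fst2 z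

/-- `F` is strongly metrically subregular around `zb ∈ gph F` (with finite `lsubreg`). -/
def StrSubregAround (F : E n → Set (E n)) (zb : E2 n) : Prop :=
  ∃ δ > (0 : ℝ), (∀ z ∈ gph F, dist z zb < δ → StrSubregAt F z) ∧
    ∃ c : ℝ, ∀ z ∈ gph F, dist z zb < δ → subregMod F z ≤ c

/-- `lsubreg F(x̄,ȳ)`: the limsup of `subreg F(x,y)` over graph points `(x,y) → (x̄,ȳ)`. -/
def lsubreg (F : E n → Set (E n)) (zb : E2 n) : ℝ :=
  Filter.limsup (fun z => subregMod F z) (𝓝[gph F] zb)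

/-- Metric regularity around `zb ∈ gph F` with constant `κ`. -/
def RegWith (F : E n → Set (E n)) (zb : E2 n) (κ : ℝ) : Prop :=
  ∃ δ > (0 : ℝ), ∀ x y : E n, dist x (fst2 zb) < δ → dist y (snd2 zb) < δ →
    EMetric.infEdist x (Finv F y) ≤ ENNReal.ofReal κ * EMetric.infEdist y (F x)

/-- `F` is metrically regular around `zb ∈ gph F`. -/
def MetrRegAround (F : E n → Set (E n)) (zb : E2 n) : Prop := ∃ κ, 0 ≤ κ ∧ RegWith F zb κ

/-- The modulus of metric regularity `reg F(x̄,ȳ)`. -/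
def regMod (F : E n → Set (E n)) (zb : E2 n) : ℝ := sInf {κ | 0 ≤ κ ∧ RegWith F zb κ}

/-- `F` is strongly metrically regular around `zb ∈ gph F`: metrically regular and `F⁻¹`
has a single-valued localization around `(ȳ, x̄)`. -/
def StrRegAround (F : E n → Set (E n)) (zb : E2 n) : Prop :=
  MetrRegAround F zb ∧
  ∃ (X' Y' : Set (E n)) (h : E n → E n), IsOpen X' ∧ IsOpen Y' ∧
    fst2 zb ∈ X' ∧ snd2 zb ∈ Y' ∧ h (snd2 zb) = fst2 zb ∧
    gph F ∩ {w | fst2 w ∈ X' ∧ snd2 w ∈ Y'} = {w | snd2 w ∈ Y' ∧ fst2 w = h (snd2 w)}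

/-- `F` is SCD semismooth* at `zb ∈ gph F`. -/
def SCDSemismoothAt (F : E n → Set (E n)) (zb : E2 n) : Prop :=
  SCDAround F zb ∧ ∀ ε > (0 : ℝ), ∃ δ > (0 : ℝ), ∀ z ∈ gph F, dist z zb ≤ δ →
    ∀ L ∈ SpStar F z, ∀ w : E2 n, w ∈ L →
      |⟪snd2 w, fst2 z - fst2 zb⟫_ℝ - ⟪fst2 w, snd2 z - snd2 zb⟫_ℝ| ≤ ε * ‖z - zb‖ * ‖w‖

/-- `F` is graphically Lipschitzian of dimension `n` at `zb` with transformation mapping `Φ`,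
local inverse `Ψ`, neighborhood `W`, and `K`-Lipschitz map `f : U → ℝ^n`. -/
def GraphLipWith (F : E n → Set (E n)) (zb : E2 n) (Φ Ψ : E2 n → E2 n)
    (W : Set (E2 n)) (U : Set (E n)) (f : E n → E n) (K : ℝ≥0) : Prop :=
  IsOpen W ∧ zb ∈ W ∧ ContDiffOn ℝ 1 Φ W ∧ Set.InjOn Φ W ∧ IsOpen (Φ '' W) ∧
  ContDiffOn ℝ 1 Ψ (Φ '' W) ∧ Set.LeftInvOn Ψ Φ W ∧
  IsOpen U ∧ LipschitzOnWith K f U ∧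
  Φ '' (gph F ∩ W) = {w | fst2 w ∈ U ∧ snd2 w = f (fst2 w)}

/-- `F` is graphically Lipschitzian of dimension `n` at `zb` with transformation mapping `Φ`. -/
def GraphLipAt (F : E n → Set (E n)) (zb : E2 n) (Φ : E2 n → E2 n) : Prop :=
  ∃ Ψ W U f K, GraphLipWith F zb Φ Ψ W U f K

/-- `∇̄^Φ F(x̄,ȳ)`: the `(2n)×n` matrices `Z` (as linear maps `ℝ^n → ℝ^{2n}`) with
`rge Z ∈ Sp F(x̄,ȳ)` and upper block of `∇Φ(x̄,ȳ)Z` equal to the identity. -/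
def BsubPhi (F : E n → Set (E n)) (zb : E2 n) (Φ : E2 n → E2 n) : Set (E n →L[ℝ] E2 n) :=
  {Z | LinearMap.range (Z : E n →ₗ[ℝ] E2 n) ∈ Sp F zb ∧ ∀ p, fst2 (fderiv ℝ Φ zb (Z p)) = p}

/-- A (globally) monotone set-valued map. -/
def MonoMap (T : E n → Set (E n)) : Prop :=
  ∀ x₁ y₁ x₂ y₂, y₁ ∈ T x₁ → y₂ ∈ T x₂ → 0 ≤ ⟪y₁ - y₂, x₁ - x₂⟫_ℝ

/-- `F` is locally maximally monotone at `z ∈ gph F`. -/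
def LocMaxMonoAt (F : E n → Set (E n)) (z : E2 n) : Prop :=
  ∃ X Y : Set (E n), IsOpen X ∧ IsOpen Y ∧ fst2 z ∈ X ∧ snd2 z ∈ Y ∧
    (∀ w₁ ∈ gph F ∩ {w | fst2 w ∈ X ∧ snd2 w ∈ Y},
     ∀ w₂ ∈ gph F ∩ {w | fst2 w ∈ X ∧ snd2 w ∈ Y},
       0 ≤ ⟪snd2 w₁ - snd2 w₂, fst2 w₁ - fst2 w₂⟫_ℝ) ∧
    ∀ T : E n → Set (E n), MonoMap T →
      gph F ∩ {w | fst2 w ∈ X ∧ snd2 w ∈ Y} ⊆ gph T →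
      gph F ∩ {w | fst2 w ∈ X ∧ snd2 w ∈ Y} = gph T ∩ {w | fst2 w ∈ X ∧ snd2 w ∈ Y}

/-- `F` is locally maximally hypomonotone at `z ∈ gph F`:
`γI + F` is locally maximally monotone at `(x, γx + y)` for some `γ ≥ 0`. -/
def LocMaxHypoAt (F : E n → Set (E n)) (z : E2 n) : Prop :=
  ∃ γ : ℝ, 0 ≤ γ ∧ LocMaxMonoAt (fun x => (fun y => γ • x + y) '' F x)
    (mk2 (fst2 z) (γ • fst2 z + snd2 z))

/-- A firmly nonexpansive matrix: `⟨Bv, v⟩ ≥ ‖Bv‖²` for all `v`. -/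
def FirmNonexp (B : E n →L[ℝ] E n) : Prop := ∀ v, ‖B v‖ ^ 2 ≤ ⟪B v, v⟫_ℝ

/-!
Near `(x̄, ȳ)` the graph of `F` is a monotone set `G` that is maximal within a box. Monotonicity
makes `(x, y) ↦ x + y` injective on `G` with a 1-Lipschitz inverse `u ↦ x`, and Minty's extension
lemma (a finite Kirszbraun argument plus compactness) together with local maximality makes it
surjective onto a ball around `x̄ + ȳ`. So in the coordinates `Φ(x, y) = (x + y, x)` the graph is
locally that of a 1-Lipschitz map `f`. At points of differentiability of `f`, dense by Rademacher,
the tangent space is `rge(∇f, I - ∇f)`, and compactness of `{‖A‖ ≤ 1}` yields an element of `Sp F`.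
Tangent vectors `(ξ, η)` to a monotone graph satisfy the closed condition `⟪ξ, η⟫ ≥ 0`, hence so
does every `L ∈ Sp F(x, y)`; an `n`-dimensional subspace of such pairs is `rge(B, I - B)` with `B`
firmly nonexpansive, and its adjoint subspace is `rge(Bᵀ, I - Bᵀ)`.
-/

section Kirszbraun

variable {H : Type*} [NormedAddCommGroup H] [InnerProductSpace ℝ H]

lemma inner_nonneg_iff_norm_sub_le_norm_add {a b : H} : 0 ≤ ⟪a, b⟫_ℝ ↔ ‖a - b‖ ≤ ‖a + b‖ := by
  rw [← sq_le_sq₀ (norm_nonneg _) (norm_nonneg _), norm_sub_sq_real, norm_add_sq_real]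
  constructor <;> intro h <;> linarith

lemma norm_le_norm_add_of_inner_nonneg {a b : H} (h : 0 ≤ ⟪a, b⟫_ℝ) : ‖a‖ ≤ ‖a + b‖ := by
  rw [← sq_le_sq₀ (norm_nonneg _) (norm_nonneg _), norm_add_sq_real]
  nlinarith [sq_nonneg ‖b‖]

lemma eventually_norm_add_smul_sub_lt {y b d : H} (h : 0 < ⟪d, b - y⟫_ℝ) :
    ∀ᶠ t in 𝓝[>] (0 : ℝ), ‖y + t • d - b‖ < ‖y - b‖ := by
  have hsmall : ∀ᶠ t in 𝓝[>] (0 : ℝ), t * ‖d‖ ^ 2 < 2 * ⟪d, b - y⟫_ℝ := by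
    have : Tendsto (fun t : ℝ => t * ‖d‖ ^ 2) (𝓝[>] 0) (𝓝 0) := by
      have := ((continuous_id.mul_const (‖d‖ ^ 2)).tendsto (0 : ℝ)).mono_left
        (nhdsWithin_le_nhds (s := Ioi 0))
      simpa using this
    exact this.eventually_lt_const (by linarith)
  filter_upwards [hsmall, self_mem_nhdsWithin] with t hts (ht : 0 < t)
  rw [← sq_lt_sq₀ (norm_nonneg _) (norm_nonneg _),
    show y + t • d - b = (y - b) + t • d by abel, norm_add_sq_real, norm_smul,
    real_inner_smul_right, Real.norm_of_nonneg ht.le, show y - b = -(b - y) by abel,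
    inner_neg_left, real_inner_comm]
  nlinarith

lemma sum_sum_mul_norm_sub_sq {κ : Type*} [Fintype κ] (w : κ → ℝ) (hw : ∑ k, w k = 1)
    (c : κ → H) :
    ∑ k, ∑ l, w k * w l * ‖c k - c l‖ ^ 2
      = 2 * ∑ k, w k * ‖c k‖ ^ 2 - 2 * ‖∑ k, w k • c k‖ ^ 2 := by
  have hsq : ‖∑ k, w k • c k‖ ^ 2 = ∑ k, ∑ l, w k * w l * ⟪c k, c l⟫_ℝ := by
    rw [← real_inner_self_eq_norm_sq, sum_inner]
    simp only [inner_sum, real_inner_smul_left, real_inner_smul_right]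
    exact Finset.sum_congr rfl fun k _ => Finset.sum_congr rfl fun l _ => by ring
  have hleft : ∑ k, ∑ l, w k * w l * ‖c k‖ ^ 2 = ∑ k, w k * ‖c k‖ ^ 2 := by
    simp_rw [← Finset.sum_mul, ← Finset.mul_sum, hw, mul_one]
  have hright : ∑ k, ∑ l, w k * w l * ‖c l‖ ^ 2 = ∑ l, w l * ‖c l‖ ^ 2 := by
    simp_rw [mul_assoc, ← Finset.mul_sum, ← Finset.sum_mul, hw, one_mul]
  have hmid : ∑ k, ∑ l, w k * w l * (2 * ⟪c k, c l⟫_ℝ)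
      = 2 * ∑ k, ∑ l, w k * w l * ⟪c k, c l⟫_ℝ := by
    simp only [Finset.mul_sum]
    exact Finset.sum_congr rfl fun k _ => Finset.sum_congr rfl fun l _ => by ring
  simp only [hsq, norm_sub_sq_real, mul_sub, mul_add, Finset.sum_sub_distrib,
    Finset.sum_add_distrib, hleft, hright, hmid]
  ring

lemma le_one_of_sum_smul_eq_zero {κ : Type*} [Fintype κ] {w : κ → ℝ} (hw0 : ∀ k, 0 ≤ w k)
    (hw1 : ∑ k, w k = 1) {c v : κ → H} {lam : ℝ} (hc : ∑ k, w k • c k = 0)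
    (hv : ∀ k, v k ≠ 0) (hcv : ∀ k, ‖c k‖ ^ 2 = lam * ‖v k‖ ^ 2)
    (hcc : ∀ k l, ‖c k - c l‖ ≤ ‖v k - v l‖) : lam ≤ 1 := by
  have hS : 0 < ∑ k, w k * ‖v k‖ ^ 2 := by
    obtain ⟨k, -, hk⟩ := Finset.exists_ne_zero_of_sum_ne_zero (hw1 ▸ one_ne_zero)
    exact Finset.sum_pos' (fun k _ => by have := hw0 k; positivity)
      ⟨k, Finset.mem_univ _, mul_pos ((hw0 k).lt_of_ne' hk) (by have := hv k; positivity)⟩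
  have hle : ∑ k, ∑ l, w k * w l * ‖c k - c l‖ ^ 2 ≤ ∑ k, ∑ l, w k * w l * ‖v k - v l‖ ^ 2 :=
    Finset.sum_le_sum fun k _ => Finset.sum_le_sum fun l _ =>
      mul_le_mul_of_nonneg_left (pow_le_pow_left₀ (norm_nonneg _) (hcc k l) 2)
        (mul_nonneg (hw0 k) (hw0 l))
  rw [sum_sum_mul_norm_sub_sq w hw1, sum_sum_mul_norm_sub_sq w hw1, hc] at hle
  simp only [hcv, mul_left_comm _ lam, ← Finset.mul_sum, norm_zero] at hle
  nlinarith [sq_nonneg ‖∑ k, w k • v k‖]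

lemma mem_convexHull_of_forall_sup'_le [CompleteSpace H] {ι : Type*} {s : Finset ι}
    (hs : s.Nonempty) (b : ι → H) {r : ι → ℝ} (hr : ∀ i ∈ s, 0 < r i) {y₀ : H}
    (hmin : ∀ y, s.sup' hs (fun i => ‖y₀ - b i‖ ^ 2 / r i)
      ≤ s.sup' hs (fun i => ‖y - b i‖ ^ 2 / r i)) :
    y₀ ∈ convexHull ℝ (b '' {i | i ∈ s ∧
      ‖y₀ - b i‖ ^ 2 / r i = s.sup' hs (fun i => ‖y₀ - b i‖ ^ 2 / r i)}) := by
  set m := s.sup' hs (fun i => ‖y₀ - b i‖ ^ 2 / r i)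
  have hfin : (b '' {i | i ∈ s ∧ ‖y₀ - b i‖ ^ 2 / r i = m}).Finite :=
    (s.finite_toSet.subset fun i hi => hi.1).image b
  by_contra hy
  obtain ⟨f, c, hfy, hfc⟩ := geometric_hahn_banach_point_closed (convex_convexHull ℝ _)
    (hfin.isClosed_convexHull ℝ) hy
  set d := (InnerProductSpace.toDual ℝ H).symm f
  -- moving from `y₀` towards the separating direction `d` decreases every maximal term
  have hdecr : ∀ i ∈ s, ∀ᶠ t in 𝓝[>] (0 : ℝ), ‖y₀ + t • d - b i‖ ^ 2 / r i < m := by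
    intro i hi
    rcases (Finset.le_sup' (fun i => ‖y₀ - b i‖ ^ 2 / r i) hi).lt_or_eq with hlt | heq
    · have hcont : ContinuousAt (fun t : ℝ => ‖y₀ + t • d - b i‖ ^ 2 / r i) 0 := by fun_prop
      have := hcont.tendsto.mono_left (nhdsWithin_le_nhds (s := Ioi 0))
      rw [zero_smul, add_zero] at this
      exact this.eventually_lt_const hlt
    · have hd : 0 < ⟪d, b i - y₀⟫_ℝ := by
        rw [InnerProductSpace.toDual_symm_apply, map_sub]
        linarith [hfc (b i) (subset_convexHull ℝ _ ⟨i, ⟨hi, heq⟩, rfl⟩)]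
      filter_upwards [eventually_norm_add_smul_sub_lt hd] with t ht
      calc ‖y₀ + t • d - b i‖ ^ 2 / r i < ‖y₀ - b i‖ ^ 2 / r i := by
            have := hr i hi
            gcongr
        _ = m := heq
  obtain ⟨t, ht⟩ := ((Finset.eventually_all s).2 hdecr).exists
  exact (hmin (y₀ + t • d)).not_gt ((Finset.sup'_lt_iff hs).2 ht)

theorem exists_forall_norm_sub_le_of_finset [FiniteDimensional ℝ H] {ι : Type*} (s : Finset ι)
    (a b : ι → H) (hab : ∀ i ∈ s, ∀ j ∈ s, ‖b i - b j‖ ≤ ‖a i - a j‖) (u : H) :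
    ∃ y, ∀ i ∈ s, ‖y - b i‖ ≤ ‖u - a i‖ := by
  rcases s.eq_empty_or_nonempty with rfl | hs
  · simp
  by_cases hu : ∃ i ∈ s, u = a i
  · obtain ⟨i, hi, rfl⟩ := hu
    exact ⟨b i, fun j hj => hab i hi j hj⟩
  push Not at hu
  have hr : ∀ i ∈ s, 0 < ‖u - a i‖ ^ 2 := fun i hi => by
    have := sub_ne_zero.2 (hu i hi)
    positivity
  -- a minimiser of the largest ratio `‖y - b i‖ / ‖u - a i‖` lies in the convex hull of the
  -- centres where the maximum is attained, and that forces the ratio to be at most `1`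
  set Λ : H → ℝ := fun y => s.sup' hs fun i => ‖y - b i‖ ^ 2 / ‖u - a i‖ ^ 2
  obtain ⟨y, hy⟩ : ∃ y, ∀ y', Λ y ≤ Λ y' := by
    have ⟨i, hi⟩ := hs
    refine Continuous.exists_forall_le (Continuous.finset_sup'_apply hs fun i _ => by fun_prop) ?_
    refine tendsto_atTop_mono
      (fun y => Finset.le_sup' (fun i => ‖y - b i‖ ^ 2 / ‖u - a i‖ ^ 2) hi) ?_
    have hfar : Tendsto (fun y => ‖y - b i‖) (cocompact H) atTop := by
      simpa only [dist_eq_norm] using tendsto_dist_right_cocompact_atTop (b i)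
    exact ((tendsto_pow_atTop two_ne_zero).comp hfar).atTop_div_const (hr i hi)
  obtain ⟨κ, _, w, z, hw0, hw1, hz, hwz⟩ :=
    mem_convexHull_iff_exists_fintype.1 (mem_convexHull_of_forall_sup'_le hs b hr hy)
  choose j hj hjz using hz
  have hΛ : Λ y ≤ 1 := by
    refine le_one_of_sum_smul_eq_zero hw0 hw1 (c := fun k => b (j k) - y)
      (v := fun k => u - a (j k)) ?_ (fun k => sub_ne_zero.2 (hu _ (hj k).1)) (fun k => ?_)
      (fun k l => ?_)
    · simp only [smul_sub, Finset.sum_sub_distrib, ← Finset.sum_smul, hw1, one_smul, hjz, hwz,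
        sub_self]
    · change _ = s.sup' hs _ * _
      rw [norm_sub_rev, ← (hj k).2, div_mul_cancel₀ _ (hr _ (hj k).1).ne']
    · simpa [norm_sub_rev (a (j k))] using hab _ (hj k).1 _ (hj l).1
  refine ⟨y, fun i hi => ?_⟩
  have hi' := (Finset.le_sup' (fun i => ‖y - b i‖ ^ 2 / ‖u - a i‖ ^ 2) hi).trans hΛ
  rw [div_le_one (hr i hi)] at hi'
  exact (sq_le_sq₀ (norm_nonneg _) (norm_nonneg _)).1 hi'

/-- Kirszbraun's one-point extension. -/
theorem exists_forall_norm_sub_le [FiniteDimensional ℝ H] {ι : Type*} (a b : ι → H)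
    (hab : ∀ i j, ‖b i - b j‖ ≤ ‖a i - a j‖) (u : H) : ∃ y, ∀ i, ‖y - b i‖ ≤ ‖u - a i‖ := by
  classical
  rcases isEmpty_or_nonempty ι with hι | ⟨⟨i₀⟩⟩
  · exact ⟨0, isEmptyElim⟩
  have hfip : ∀ s : Finset ι,
      (closedBall (b i₀) ‖u - a i₀‖ ∩ ⋂ i ∈ s, closedBall (b i) ‖u - a i‖).Nonempty := by
    intro s
    obtain ⟨y, hy⟩ :=
      exists_forall_norm_sub_le_of_finset (insert i₀ s) a b (fun i _ j _ => hab i j) u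
    exact ⟨y, mem_closedBall_iff_norm.2 (hy i₀ (Finset.mem_insert_self _ _)),
      mem_iInter₂.2 fun i hi => mem_closedBall_iff_norm.2 (hy i (Finset.mem_insert_of_mem hi))⟩
  obtain ⟨y, -, hy⟩ := (isCompact_closedBall (b i₀) _).inter_iInter_nonempty _
    (fun i => isClosed_closedBall) hfip
  exact ⟨y, fun i => mem_closedBall_iff_norm.1 (mem_iInter.1 hy i)⟩

/-- Minty's extension lemma. -/
theorem exists_forall_inner_sub_nonneg [FiniteDimensional ℝ H] {ι : Type*} (x y : ι → H)
    (hmono : ∀ i j, 0 ≤ ⟪x i - x j, y i - y j⟫_ℝ) (u : H) :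
    ∃ z, ∀ i, 0 ≤ ⟪z - x i, (u - z) - y i⟫_ℝ := by
  -- the Cayley transform `(x, y) ↦ (x + y, x - y)` turns monotone pairs into nonexpansive ones
  obtain ⟨v, hv⟩ := exists_forall_norm_sub_le (fun i => x i + y i) (fun i => x i - y i)
    (fun i j => by
      convert inner_nonneg_iff_norm_sub_le_norm_add.1 (hmono i j) using 2 <;> abel) u
  refine ⟨(2 : ℝ)⁻¹ • (u + v), fun i => inner_nonneg_iff_norm_sub_le_norm_add.2 ?_⟩
  convert hv i using 2 <;> module

end Kirszbraun

@[simp] lemma fst2_mk2 (a b : E n) : fst2 (mk2 a b) = a := rfl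
@[simp] lemma snd2_mk2 (a b : E n) : snd2 (mk2 a b) = b := rfl
@[simp] lemma mk2_fst2_snd2 (z : E2 n) : mk2 (fst2 z) (snd2 z) = z := rfl

lemma mk2_ext {z w : E2 n} (h1 : fst2 z = fst2 w) (h2 : snd2 z = snd2 w) : z = w := by
  rw [← mk2_fst2_snd2 z, ← mk2_fst2_snd2 w, h1, h2]

@[simp] lemma fst2_add (z w : E2 n) : fst2 (z + w) = fst2 z + fst2 w := rfl
@[simp] lemma snd2_add (z w : E2 n) : snd2 (z + w) = snd2 z + snd2 w := rfl
@[simp] lemma fst2_sub (z w : E2 n) : fst2 (z - w) = fst2 z - fst2 w := rfl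
@[simp] lemma snd2_sub (z w : E2 n) : snd2 (z - w) = snd2 z - snd2 w := rfl
@[simp] lemma fst2_neg (z : E2 n) : fst2 (-z) = -fst2 z := rfl
@[simp] lemma snd2_neg (z : E2 n) : snd2 (-z) = -snd2 z := rfl
@[simp] lemma fst2_smul (c : ℝ) (z : E2 n) : fst2 (c • z) = c • fst2 z := rfl
@[simp] lemma snd2_smul (c : ℝ) (z : E2 n) : snd2 (c • z) = c • snd2 z := rfl

lemma inner_eq_fst2_add_snd2 (z w : E2 n) :
    ⟪z, w⟫_ℝ = ⟪fst2 z, fst2 w⟫_ℝ + ⟪snd2 z, snd2 w⟫_ℝ := rfl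

lemma continuous_fst2 : Continuous (fst2 : E2 n → E n) :=
  continuous_fst.comp (WithLp.prodContinuousLinearEquiv 2 ℝ (E n) (E n)).continuous

lemma continuous_snd2 : Continuous (snd2 : E2 n → E n) :=
  continuous_snd.comp (WithLp.prodContinuousLinearEquiv 2 ℝ (E n) (E n)).continuous

lemma continuous_mk2 : Continuous (fun p : E n × E n => mk2 p.1 p.2) :=
  (WithLp.prodContinuousLinearEquiv 2 ℝ (E n) (E n)).symm.continuous

lemma tendsto_mk2 {α : Type*} {l : Filter α} {f g : α → E n} {a b : E n}
    (hf : Tendsto f l (𝓝 a)) (hg : Tendsto g l (𝓝 b)) :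
    Tendsto (fun k => mk2 (f k) (g k)) l (𝓝 (mk2 a b)) :=
  (continuous_mk2.tendsto (a, b)).comp (hf.prodMk_nhds hg)

def monoCone (n : ℕ) : Set (E2 n) := {w | 0 ≤ ⟪fst2 w, snd2 w⟫_ℝ}

def IsMonoSet (G : Set (E2 n)) : Prop := ∀ w₁ ∈ G, ∀ w₂ ∈ G, w₁ - w₂ ∈ monoCone n

lemma isClosed_monoCone : IsClosed (monoCone n) :=
  isClosed_le continuous_const (continuous_fst2.inner continuous_snd2)

lemma smul_mem_monoCone (c : ℝ) {w : E2 n} (hw : w ∈ monoCone n) : c • w ∈ monoCone n := by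
  simp only [monoCone, mem_ofPred_eq, fst2_smul, snd2_smul, real_inner_smul_left,
    real_inner_smul_right, ← mul_assoc] at hw ⊢
  exact mul_nonneg (mul_self_nonneg c) hw

lemma neg_mem_monoCone {w : E2 n} : -w ∈ monoCone n ↔ w ∈ monoCone n := by
  simp only [monoCone, mem_ofPred_eq, fst2_neg, snd2_neg, inner_neg_neg]

lemma norm_fst2_le_of_mem_monoCone {w : E2 n} (hw : w ∈ monoCone n) :
    ‖fst2 w‖ ≤ ‖fst2 w + snd2 w‖ :=
  norm_le_norm_add_of_inner_nonneg hw

lemma norm_snd2_le_of_mem_monoCone {w : E2 n} (hw : w ∈ monoCone n) :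
    ‖snd2 w‖ ≤ ‖fst2 w + snd2 w‖ := by
  rw [add_comm]
  exact norm_le_norm_add_of_inner_nonneg (real_inner_comm (fst2 w) (snd2 w) ▸ hw)

lemma eq_zero_of_mem_monoCone {w : E2 n} (hw : w ∈ monoCone n) (h : fst2 w + snd2 w = 0) :
    w = 0 := by
  have h1 := norm_fst2_le_of_mem_monoCone hw
  have h2 := norm_snd2_le_of_mem_monoCone hw
  rw [h, norm_zero, norm_le_zero_iff] at h1 h2
  exact mk2_ext h1 h2

lemma firmNonexp_iff (B : E n →L[ℝ] E n) :
    FirmNonexp B ↔ ∀ p, mk2 (B p) (p - B p) ∈ monoCone n := by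
  simp only [FirmNonexp, monoCone, mem_ofPred_eq, fst2_mk2, snd2_mk2, inner_sub_right,
    real_inner_self_eq_norm_sq, sub_nonneg]

def graphMapBIB (B : E n →L[ℝ] E n) : E n →ₗ[ℝ] E2 n :=
  (lp2 n).symm.toLinearMap.comp (LinearMap.prod B.toLinearMap (LinearMap.id - B.toLinearMap))

def rgeBIB (B : E n →L[ℝ] E n) : Submodule ℝ (E2 n) := LinearMap.range (graphMapBIB B)

@[simp] lemma graphMapBIB_apply (B : E n →L[ℝ] E n) (p : E n) :
    graphMapBIB B p = mk2 (B p) (p - B p) := rfl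

lemma mem_rgeBIB_iff {B : E n →L[ℝ] E n} {w : E2 n} :
    w ∈ rgeBIB B ↔ fst2 w = B (fst2 w + snd2 w) := by
  refine ⟨?_, fun h => ⟨fst2 w + snd2 w, mk2_ext h.symm ?_⟩⟩
  · rintro ⟨p, rfl⟩
    simp
  · simp [← h]

lemma coe_rgeBIB (B : E n →L[ℝ] E n) :
    (rgeBIB B : Set (E2 n)) = {w | ∃ p : E n, w = mk2 (B p) (p - B p)} := by
  ext w
  simp [rgeBIB, eq_comm]

lemma finrank_rgeBIB (B : E n →L[ℝ] E n) : Module.finrank ℝ (rgeBIB B) = n := by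
  have hinj : Function.Injective (graphMapBIB B) := fun p q h => by
    simpa using congrArg (fun w => fst2 w + snd2 w) h
  rw [rgeBIB, LinearMap.finrank_range_of_inj hinj, finrank_euclideanSpace_fin]

lemma mem_orthogonal_rgeBIB_iff {B : E n →L[ℝ] E n} {w : E2 n} :
    w ∈ (rgeBIB B)ᗮ ↔ -snd2 w = ContinuousLinearMap.adjoint B (fst2 w - snd2 w) := by
  have hinner : ∀ p, ⟪graphMapBIB B p, w⟫_ℝ
      = ⟪p, ContinuousLinearMap.adjoint B (fst2 w - snd2 w) + snd2 w⟫_ℝ := fun p => by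
    rw [inner_eq_fst2_add_snd2, graphMapBIB_apply, fst2_mk2, snd2_mk2, map_sub,
      inner_add_right, inner_sub_right, ContinuousLinearMap.adjoint_inner_right,
      ContinuousLinearMap.adjoint_inner_right, inner_sub_left]
    ring
  simp only [Submodule.mem_orthogonal, rgeBIB, LinearMap.mem_range, forall_exists_index,
    forall_apply_eq_imp_iff, hinner]
  refine ⟨fun h => ?_, fun h p => by rw [← h, neg_add_cancel, inner_zero_right]⟩
  have := h (ContinuousLinearMap.adjoint B (fst2 w - snd2 w) + snd2 w)
  rw [inner_self_eq_zero] at this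
  exact (eq_neg_of_add_eq_zero_left this).symm

lemma Sneg_apply (z : E2 n) : Sneg n z = mk2 (-snd2 z) (fst2 z) := rfl

lemma adjS_rgeBIB (B : E n →L[ℝ] E n) :
    adjS (rgeBIB B) = rgeBIB (ContinuousLinearMap.adjoint B) := by
  ext v
  obtain ⟨w, rfl⟩ := (Sneg n).surjective v
  rw [adjS, Submodule.mem_map_equiv, LinearEquiv.symm_apply_apply, mem_orthogonal_rgeBIB_iff,
    mem_rgeBIB_iff, Sneg_apply, fst2_mk2, snd2_mk2, neg_add_eq_sub]

lemma exists_firmNonexp_eq_rgeBIB {L : Submodule ℝ (E2 n)} (hL : Module.finrank ℝ L = n)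
    (hmono : (L : Set (E2 n)) ⊆ monoCone n) : ∃ B, FirmNonexp B ∧ L = rgeBIB B := by
  let q : L →ₗ[ℝ] E n :=
    (LinearMap.fst ℝ _ _ + LinearMap.snd ℝ _ _) ∘ₗ (lp2 n).toLinearMap ∘ₗ L.subtype
  have hinj : Function.Injective q := by
    rw [← LinearMap.ker_eq_bot, LinearMap.ker_eq_bot']
    exact fun w hw => Subtype.ext (eq_zero_of_mem_monoCone (hmono w.2) hw)
  let e := LinearMap.linearEquivOfInjective q hinj (by simp [hL])
  let B : E n →L[ℝ] E n := LinearMap.toContinuousLinearMap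
    (LinearMap.fst ℝ _ _ ∘ₗ (lp2 n).toLinearMap ∘ₗ L.subtype ∘ₗ e.symm.toLinearMap)
  have hgraph : graphMapBIB B = L.subtype ∘ₗ e.symm.toLinearMap := by
    ext p : 1
    have hq : q (e.symm p) = p := e.apply_symm_apply p
    exact mk2_ext rfl (sub_eq_iff_eq_add'.2 hq.symm)
  have hrange : L = rgeBIB B := by
    rw [rgeBIB, hgraph, LinearMap.range_comp, LinearEquiv.range, Submodule.map_top,
      Submodule.range_subtype]
  exact ⟨B, (firmNonexp_iff B).2 fun p => hmono (hrange ▸ ⟨p, rfl⟩), hrange⟩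

lemma tendsto_clm_apply {X Y : Type*} [NormedAddCommGroup X] [NormedSpace ℝ X]
    [NormedAddCommGroup Y] [NormedSpace ℝ Y] {Tk : ℕ → X →L[ℝ] Y} {T : X →L[ℝ] Y} {xk : ℕ → X}
    {x : X} (hT : Tendsto Tk atTop (𝓝 T)) (hx : Tendsto xk atTop (𝓝 x)) :
    Tendsto (fun k => Tk k (xk k)) atTop (𝓝 (T x)) :=
  (isBoundedBilinearMap_apply.continuous.tendsto (T, x)).comp (hT.prodMk_nhds hx)

lemma projC_apply_eq_self_iff {L : Submodule ℝ (E2 n)} {w : E2 n} : projC L w = w ↔ w ∈ L :=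
  Submodule.starProjection_eq_self_iff

lemma projC_apply_mem (L : Submodule ℝ (E2 n)) (w : E2 n) : projC L w ∈ L :=
  Submodule.starProjection_apply_mem L w

section Limits

variable {Lk : ℕ → Submodule ℝ (E2 n)} {L : Submodule ℝ (E2 n)}

lemma tendsto_projC_apply (hd : Tendsto (fun k => dZ (Lk k) L) atTop (𝓝 0)) {wk : ℕ → E2 n}
    {w : E2 n} (hw : Tendsto wk atTop (𝓝 w)) :
    Tendsto (fun k => projC (Lk k) (wk k)) atTop (𝓝 (projC L w)) :=
  tendsto_clm_apply (tendsto_iff_norm_sub_tendsto_zero.2 hd) hw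

lemma mem_of_tendsto_dZ (hd : Tendsto (fun k => dZ (Lk k) L) atTop (𝓝 0)) {wk : ℕ → E2 n}
    {w : E2 n} (hwk : ∀ k, wk k ∈ Lk k) (hw : Tendsto wk atTop (𝓝 w)) : w ∈ L := by
  have hfix : (fun k => projC (Lk k) (wk k)) = wk :=
    funext fun k => projC_apply_eq_self_iff.2 (hwk k)
  have := tendsto_projC_apply hd hw
  rw [hfix] at this
  exact projC_apply_eq_self_iff.1 (tendsto_nhds_unique this hw)

lemma coe_subset_of_tendsto_dZ (hd : Tendsto (fun k => dZ (Lk k) L) atTop (𝓝 0))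
    {C : Set (E2 n)} (hC : IsClosed C) (hLk : ∀ᶠ k in atTop, (Lk k : Set (E2 n)) ⊆ C) :
    (L : Set (E2 n)) ⊆ C := by
  intro w hw
  have := tendsto_projC_apply hd (tendsto_const_nhds (x := w))
  rw [projC_apply_eq_self_iff.2 hw] at this
  exact hC.mem_of_tendsto this (hLk.mono fun k hk => hk (projC_apply_mem _ w))

lemma exists_subseq_tendsto_dZ (Lk : ℕ → Submodule ℝ (E2 n)) :
    ∃ (φ : ℕ → ℕ) (L : Submodule ℝ (E2 n)), StrictMono φ ∧
      Tendsto (fun k => dZ (Lk (φ k)) L) atTop (𝓝 0) := by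
  let S : Set (E2 n →L[ℝ] E2 n) :=
    {P | ∀ v, P (P v) = P v} ∩ {P | ∀ v w, ⟪P v, w⟫_ℝ = ⟪v, P w⟫_ℝ} ∩ closedBall 0 1
  have happly (v : E2 n) : Continuous fun P : E2 n →L[ℝ] E2 n => P v :=
    (ContinuousLinearMap.apply ℝ _ v).continuous
  have hS : IsCompact S := by
    refine (isCompact_closedBall _ _).inter_left (IsClosed.inter ?_ ?_) <;>
      simp only [ofPred_forall]
    · exact isClosed_iInter fun v => isClosed_eq
        (isBoundedBilinearMap_apply.continuous.comp (continuous_id.prodMk (happly v)))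
        (happly v)
    · exact isClosed_iInter fun v => isClosed_iInter fun w => isClosed_eq
        ((happly v).inner continuous_const) (continuous_const.inner (happly w))
  obtain ⟨P, ⟨⟨hidem, hsymm⟩, -⟩, φ, hφ, hconv⟩ := hS.tendsto_subseq (x := fun k => projC (Lk k))
    fun k => ⟨⟨fun v => projC_apply_eq_self_iff.2 (projC_apply_mem _ v),
      (Lk k).inner_starProjection_left_eq_right⟩,
      mem_closedBall_zero_iff.2 (Lk k).starProjection_norm_le⟩
  have hP : IsStarProjection P :=
    ⟨ContinuousLinearMap.ext hidem, (ContinuousLinearMap.isSelfAdjoint_iff_isSymmetric).2 hsymm⟩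
  obtain ⟨_, hPeq⟩ := isStarProjection_iff_eq_starProjection_range.1 hP
  refine ⟨φ, P.range, hφ, ?_⟩
  have := tendsto_iff_norm_sub_tendsto_zero.1 hconv
  rwa [hPeq] at this

lemma eq_rgeBIB_of_tendsto_dZ {Bk : ℕ → E n →L[ℝ] E n} {B : E n →L[ℝ] E n}
    (hB : Tendsto Bk atTop (𝓝 B)) (hd : Tendsto (fun k => dZ (rgeBIB (Bk k)) L) atTop (𝓝 0)) :
    L = rgeBIB B := by
  ext w
  constructor
  · intro hw
    set wk := fun k => projC (rgeBIB (Bk k)) w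
    have hwk : Tendsto wk atTop (𝓝 w) := by
      simpa [projC_apply_eq_self_iff.2 hw] using
        tendsto_projC_apply hd (tendsto_const_nhds (x := w))
    have hgraph : fst2 ∘ wk = fun k => Bk k (fst2 (wk k) + snd2 (wk k)) :=
      funext fun k => mem_rgeBIB_iff.1 (projC_apply_mem _ w)
    have hfst := (continuous_fst2.tendsto w).comp hwk
    have hlim : Tendsto (fst2 ∘ wk) atTop (𝓝 (B (fst2 w + snd2 w))) := by
      rw [hgraph]
      exact tendsto_clm_apply hB (hfst.add ((continuous_snd2.tendsto w).comp hwk))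
    exact mem_rgeBIB_iff.2 (tendsto_nhds_unique hfst hlim)
  · rintro ⟨p, rfl⟩
    have hBp := tendsto_clm_apply hB (tendsto_const_nhds (x := p))
    exact mem_of_tendsto_dZ hd (fun k => ⟨p, rfl⟩) (tendsto_mk2 hBp (tendsto_const_nhds.sub hBp))

end Limits

lemma tendsto_dZ_rgeBIB {Bk : ℕ → E n →L[ℝ] E n} {B : E n →L[ℝ] E n}
    (hB : Tendsto Bk atTop (𝓝 B)) :
    Tendsto (fun k => dZ (rgeBIB (Bk k)) (rgeBIB B)) atTop (𝓝 0) := by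
  refine tendsto_of_subseq_tendsto fun ns hns => ?_
  obtain ⟨φ, L, hφ, hd⟩ := exists_subseq_tendsto_dZ fun k => rgeBIB (Bk (ns k))
  refine ⟨φ, ?_⟩
  rwa [← eq_rgeBIB_of_tendsto_dZ (hB.comp (hns.comp hφ.tendsto_atTop)) hd]

lemma tendsto_inv_smul_sub_of_hasFDerivAt {X Y : Type*} [NormedAddCommGroup X] [NormedSpace ℝ X]
    [NormedAddCommGroup Y] [NormedSpace ℝ Y] {f : X → Y} {A : X →L[ℝ] Y} {x : X}
    (hf : HasFDerivAt f A x) {t : ℕ → ℝ} (ht : ∀ k, 0 < t k) (ht0 : Tendsto t atTop (𝓝 0))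
    {vk : ℕ → X} {v : X} (hv : Tendsto vk atTop (𝓝 v)) :
    Tendsto (fun k => (t k)⁻¹ • (f (x + t k • vk k) - f x)) atTop (𝓝 (A v)) := by
  refine (hf.hasFDerivWithinAt (s := univ)).lim (by simpa using ht0.smul hv)
    (Eventually.of_forall fun _ => mem_univ _) ?_
  simpa only [inv_smul_smul₀ (ht _).ne'] using hv

section TangentCone

variable {X : Type*} [NormedAddCommGroup X] [NormedSpace ℝ X]

lemma mem_tcone_of_eventually {A : Set X} {z w : X} {t : ℕ → ℝ} {wk : ℕ → X}
    (ht : ∀ k, 0 < t k) (ht0 : Tendsto t atTop (𝓝 0)) (hw : Tendsto wk atTop (𝓝 w))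
    (hA : ∀ᶠ k in atTop, z + t k • wk k ∈ A) : w ∈ tcone A z := by
  obtain ⟨K, hK⟩ := eventually_atTop.1 hA
  exact ⟨fun k => t (k + K), fun k => wk (k + K), fun k => ht _,
    ht0.comp (tendsto_add_atTop_nat K), hw.comp (tendsto_add_atTop_nat K),
    fun k => hK _ (Nat.le_add_left K k)⟩

lemma tcone_inter_open {A O : Set X} {z : X} (hO : IsOpen O) (hz : z ∈ O) :
    tcone (A ∩ O) z = tcone A z := by
  ext w
  constructor
  · rintro ⟨t, wk, ht, ht0, hw, hmem⟩
    exact ⟨t, wk, ht, ht0, hw, fun k => (hmem k).1⟩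
  · rintro ⟨t, wk, ht, ht0, hw, hmem⟩
    refine mem_tcone_of_eventually ht ht0 hw ?_
    have hz' : Tendsto (fun k => z + t k • wk k) atTop (𝓝 z) := by
      simpa using tendsto_const_nhds.add (ht0.smul hw)
    filter_upwards [hz'.eventually (hO.mem_nhds hz)] with k hk using ⟨hmem k, hk⟩

end TangentCone

lemma tcone_subset_monoCone {G : Set (E2 n)} (hG : IsMonoSet G) {z : E2 n} (hz : z ∈ G) :
    tcone G z ⊆ monoCone n := by
  rintro w ⟨t, wk, ht, -, hw, hmem⟩
  refine isClosed_monoCone.mem_of_tendsto hw (Eventually.of_forall fun k => ?_)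
  have := smul_mem_monoCone (t k)⁻¹ (hG _ (hmem k) z hz)
  rwa [add_sub_cancel_left, inv_smul_smul₀ (ht k).ne'] at this

def prod2 (X Y : Set (E n)) : Set (E2 n) := {w | fst2 w ∈ X ∧ snd2 w ∈ Y}

def ofGph (S : Set (E2 n)) : E n → Set (E n) := fun a => {b | mk2 a b ∈ S}

lemma gph_ofGph (S : Set (E2 n)) : gph (ofGph S) = S := rfl

lemma monoMap_ofGph {S : Set (E2 n)} (hS : IsMonoSet S) : MonoMap (ofGph S) := by
  intro x₁ y₁ x₂ y₂ h₁ h₂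
  simpa [monoCone, real_inner_comm] using hS _ h₁ _ h₂

lemma IsMonoSet.insert {G : Set (E2 n)} (hG : IsMonoSet G) {w : E2 n}
    (hw : ∀ w' ∈ G, w - w' ∈ monoCone n) : IsMonoSet (insert w G) := by
  rintro w₁ (rfl | h₁) w₂ (rfl | h₂)
  · rw [sub_self]
    exact (inner_zero_left (𝕜 := ℝ) (0 : E n)).ge
  · exact hw _ h₂
  · rw [← neg_mem_monoCone, neg_sub]
    exact hw _ h₁
  · exact hG _ h₁ _ h₂

lemma mem_of_forall_sub_mem_monoCone {F : E n → Set (E n)} {X Y : Set (E n)}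
    (hmax : ∀ T : E n → Set (E n), MonoMap T → gph F ∩ prod2 X Y ⊆ gph T →
      gph F ∩ prod2 X Y = gph T ∩ prod2 X Y)
    (hG : IsMonoSet (gph F ∩ prod2 X Y)) {w : E2 n} (hwXY : w ∈ prod2 X Y)
    (hw : ∀ w' ∈ gph F ∩ prod2 X Y, w - w' ∈ monoCone n) : w ∈ gph F ∩ prod2 X Y := by
  rw [hmax _ (monoMap_ofGph (hG.insert hw)) (subset_insert _ _), gph_ofGph]
  exact ⟨mem_insert _ _, hwXY⟩

lemma exists_mem_fst2_add_snd2_eq {G : Set (E2 n)} (hG : IsMonoSet G) {X Y : Set (E n)}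
    (hmax : ∀ w ∈ prod2 X Y, (∀ w' ∈ G, w - w' ∈ monoCone n) → w ∈ G)
    {w₀ : E2 n} (hw₀ : w₀ ∈ G) {u : E n}
    (hX : closedBall (fst2 w₀) ‖u - (fst2 w₀ + snd2 w₀)‖ ⊆ X)
    (hY : closedBall (snd2 w₀) ‖u - (fst2 w₀ + snd2 w₀)‖ ⊆ Y) :
    ∃ w ∈ G, fst2 w + snd2 w = u := by
  obtain ⟨x, hx⟩ := exists_forall_inner_sub_nonneg (fun w : G => fst2 (w : E2 n))
    (fun w : G => snd2 (w : E2 n)) (fun w₁ w₂ => hG _ w₁.2 _ w₂.2) u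
  have hrel : ∀ w ∈ G, mk2 x (u - x) - w ∈ monoCone n := fun w hw => hx ⟨w, hw⟩
  have hsum : fst2 (mk2 x (u - x) - w₀) + snd2 (mk2 x (u - x) - w₀)
      = u - (fst2 w₀ + snd2 w₀) := by
    simp only [fst2_sub, snd2_sub, fst2_mk2, snd2_mk2]
    abel
  refine ⟨mk2 x (u - x), hmax _ ⟨hX ?_, hY ?_⟩ hrel, by simp⟩
  · simpa [dist_eq_norm, ← hsum] using norm_fst2_le_of_mem_monoCone (hrel w₀ hw₀)
  · simpa [dist_eq_norm, ← hsum] using norm_snd2_le_of_mem_monoCone (hrel w₀ hw₀)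

lemma IsMonoSet.exists_lipschitz_graph {G : Set (E2 n)} (hG : IsMonoSet G) {U : Set (E n)}
    (hsurj : ∀ u ∈ U, ∃ w ∈ G, fst2 w + snd2 w = u) :
    ∃ f : E n → E n, LipschitzOnWith 1 f U ∧ G ∩ {w | fst2 w + snd2 w ∈ U}
      = {w | fst2 w + snd2 w ∈ U ∧ fst2 w = f (fst2 w + snd2 w)} := by
  set q : E2 n → E n := fun w => fst2 w + snd2 w
  have hinj : InjOn q G := fun w₁ h₁ w₂ h₂ h =>
    sub_eq_zero.1 (eq_zero_of_mem_monoCone (hG _ h₁ _ h₂) (by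
      simp only [fst2_sub, snd2_sub]
      rw [sub_add_sub_comm, sub_eq_zero]
      exact h))
  refine ⟨fun u => fst2 (Function.invFunOn q G u),
    LipschitzOnWith.of_dist_le_mul fun u hu u' hu' => ?_, ?_⟩
  · set w := Function.invFunOn q G u
    set w' := Function.invFunOn q G u'
    obtain ⟨hw, hwu⟩ : w ∈ G ∧ q w = u := Function.invFunOn_pos (hsurj u hu)
    obtain ⟨hw', hwu'⟩ : w' ∈ G ∧ q w' = u' := Function.invFunOn_pos (hsurj u' hu')
    have := norm_fst2_le_of_mem_monoCone (hG _ hw _ hw')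
    simp only [fst2_sub, snd2_sub] at this
    rw [NNReal.coe_one, one_mul, dist_eq_norm, dist_eq_norm, ← hwu, ← hwu', add_sub_add_comm]
    exact this
  ext w
  refine ⟨fun ⟨hwG, hwU⟩ => ⟨hwU, congrArg fst2 (hinj.leftInvOn_invFunOn hwG).symm⟩,
    fun ⟨hwU, hwf⟩ => ?_⟩
  obtain ⟨hw', hwq⟩ := Function.invFunOn_pos (hsurj _ hwU)
  have hfst : fst2 (Function.invFunOn q G (q w)) = fst2 w := hwf.symm
  have : Function.invFunOn q G (q w) = w := mk2_ext hfst (by simpa [q, hfst] using hwq)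
  exact ⟨this ▸ hw', hwU⟩

theorem exists_lipschitz_localization {F : E n → Set (E n)} {zb : E2 n} (hzb : zb ∈ gph F)
    (hmono : LocMaxMonoAt F zb) :
    ∃ (U : Set (E n)) (W : Set (E2 n)) (f : E n → E n), IsOpen U ∧ IsOpen W ∧ zb ∈ W ∧
      LipschitzOnWith 1 f U ∧ IsMonoSet (gph F ∩ W) ∧
      gph F ∩ W = {w | fst2 w + snd2 w ∈ U ∧ fst2 w = f (fst2 w + snd2 w)} := by
  obtain ⟨X, Y, hX, hY, hxX, hyY, hmon, hmax⟩ := hmono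
  have hG : IsMonoSet (gph F ∩ prod2 X Y) := fun w₁ h₁ w₂ h₂ => by
    simpa [monoCone, real_inner_comm] using hmon w₁ h₁ w₂ h₂
  obtain ⟨δ₁, hδ₁, hXball⟩ := Metric.isOpen_iff.1 hX _ hxX
  obtain ⟨δ₂, hδ₂, hYball⟩ := Metric.isOpen_iff.1 hY _ hyY
  set U := ball (fst2 zb + snd2 zb) (min δ₁ δ₂)
  have hsurj : ∀ u ∈ U, ∃ w ∈ gph F ∩ prod2 X Y, fst2 w + snd2 w = u := by
    intro u hu
    rw [mem_ball, dist_eq_norm, lt_min_iff] at hu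
    exact exists_mem_fst2_add_snd2_eq hG
      (fun w hw hrel => mem_of_forall_sub_mem_monoCone hmax hG hw hrel) ⟨hzb, hxX, hyY⟩
      ((closedBall_subset_ball hu.1).trans hXball) ((closedBall_subset_ball hu.2).trans hYball)
  obtain ⟨f, hf, hgraph⟩ := hG.exists_lipschitz_graph hsurj
  refine ⟨U, prod2 X Y ∩ {w | fst2 w + snd2 w ∈ U}, f, isOpen_ball,
    ((hX.preimage continuous_fst2).inter (hY.preimage continuous_snd2)).inter
      (isOpen_ball.preimage (continuous_fst2.add continuous_snd2)),
    ⟨⟨hxX, hyY⟩, mem_ball_self (lt_min hδ₁ hδ₂)⟩, hf,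
    fun w₁ h₁ w₂ h₂ => hG _ ⟨h₁.1, h₁.2.1⟩ _ ⟨h₂.1, h₂.2.1⟩, ?_⟩
  rw [← inter_assoc, hgraph]

lemma exists_seq_differentiableAt {U : Set (E n)} (hU : IsOpen U) {f : E n → E n} {K : ℝ≥0}
    (hf : LipschitzOnWith K f U) {u : E n} (hu : u ∈ U) :
    ∃ uk : ℕ → E n, (∀ k, uk k ∈ U ∧ DifferentiableAt ℝ f (uk k)) ∧ Tendsto uk atTop (𝓝 u) := by
  have hdense := MeasureTheory.Measure.dense_of_ae (μ := MeasureTheory.volume)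
    hf.ae_differentiableWithinAt_of_mem
  obtain ⟨uk, huk, hlim⟩ := mem_closure_iff_seq_limit.1 (hdense.open_subset_closure_inter hU hu)
  exact ⟨uk, fun k => ⟨(huk k).1, ((huk k).2 (huk k).1).differentiableAt
    (hU.mem_nhds (huk k).1)⟩, hlim⟩

section LipschitzGraph

variable {F : E n → Set (E n)} {U : Set (E n)} {W : Set (E2 n)} {f : E n → E n}

lemma mk2_mem_gph_of_eq
    (hgraph : gph F ∩ W = {w | fst2 w + snd2 w ∈ U ∧ fst2 w = f (fst2 w + snd2 w)})
    {u : E n} (hu : u ∈ U) : mk2 (f u) (u - f u) ∈ gph F ∩ W := by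
  rw [hgraph]
  simpa using hu

lemma tcone_gph_subset_rgeBIB (hW : IsOpen W)
    (hgraph : gph F ∩ W = {w | fst2 w + snd2 w ∈ U ∧ fst2 w = f (fst2 w + snd2 w)})
    {u : E n} (hu : u ∈ U) {A : E n →L[ℝ] E n} (hf : HasFDerivAt f A u) :
    tcone (gph F) (mk2 (f u) (u - f u)) ⊆ rgeBIB A := by
  rw [← tcone_inter_open hW (mk2_mem_gph_of_eq hgraph hu).2, hgraph]
  rintro w ⟨t, wk, ht, ht0, hw, hmem⟩
  have hquot : Tendsto (fun k => (t k)⁻¹ • (f (u + t k • (fst2 (wk k) + snd2 (wk k))) - f u))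
      atTop (𝓝 (A (fst2 w + snd2 w))) :=
    tendsto_inv_smul_sub_of_hasFDerivAt hf ht ht0
      (((continuous_fst2.tendsto w).comp hw).add ((continuous_snd2.tendsto w).comp hw))
  have hfst : ∀ k, (t k)⁻¹ • (f (u + t k • (fst2 (wk k) + snd2 (wk k))) - f u)
      = fst2 (wk k) := by
    intro k
    have hk := (hmem k).2
    simp only [fst2_add, snd2_add, fst2_smul, snd2_smul, fst2_mk2, snd2_mk2] at hk
    rw [show f u + t k • fst2 (wk k) + (u - f u + t k • snd2 (wk k))
      = u + t k • (fst2 (wk k) + snd2 (wk k)) by module] at hk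
    rw [← hk, add_sub_cancel_left, inv_smul_smul₀ (ht k).ne']
  simp only [hfst] at hquot
  exact mem_rgeBIB_iff.2 (tendsto_nhds_unique ((continuous_fst2.tendsto w).comp hw) hquot)

lemma rgeBIB_subset_tcone_gph (hU : IsOpen U)
    (hgraph : gph F ∩ W = {w | fst2 w + snd2 w ∈ U ∧ fst2 w = f (fst2 w + snd2 w)})
    {u : E n} (hu : u ∈ U) {A : E n →L[ℝ] E n} (hf : HasFDerivAt f A u) :
    (rgeBIB A : Set (E2 n)) ⊆ tcone (gph F) (mk2 (f u) (u - f u)) := by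
  rintro _ ⟨p, rfl⟩
  set t : ℕ → ℝ := fun k => 1 / ((k : ℝ) + 1)
  have ht : ∀ k, 0 < t k := fun k => by positivity
  have ht0 : Tendsto t atTop (𝓝 0) := tendsto_one_div_add_atTop_nhds_zero_nat
  have hv := tendsto_inv_smul_sub_of_hasFDerivAt hf ht ht0 (tendsto_const_nhds (x := p))
  set v := fun k => (t k)⁻¹ • (f (u + t k • p) - f u)
  have hnear : Tendsto (fun k => u + t k • p) atTop (𝓝 u) := by
    simpa using tendsto_const_nhds.add (ht0.smul_const p)
  refine mem_tcone_of_eventually ht ht0 (wk := fun k => mk2 (v k) (p - v k))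
    (tendsto_mk2 hv (tendsto_const_nhds.sub hv)) ?_
  filter_upwards [hnear.eventually (hU.mem_nhds hu)] with k hk
  have htv : t k • v k = f (u + t k • p) - f u := smul_inv_smul₀ (ht k).ne' _
  have hstep : mk2 (f u) (u - f u) + t k • mk2 (v k) (p - v k)
      = mk2 (f (u + t k • p)) (u + t k • p - f (u + t k • p)) := by
    refine mk2_ext ?_ ?_ <;>
      simp only [fst2_add, snd2_add, fst2_smul, snd2_smul, fst2_mk2, snd2_mk2, smul_sub, htv] <;>
      abel
  rw [hstep]
  exact (mk2_mem_gph_of_eq hgraph hk).1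

lemma tcone_gph_eq_rgeBIB (hU : IsOpen U) (hW : IsOpen W)
    (hgraph : gph F ∩ W = {w | fst2 w + snd2 w ∈ U ∧ fst2 w = f (fst2 w + snd2 w)})
    {u : E n} (hu : u ∈ U) {A : E n →L[ℝ] E n} (hf : HasFDerivAt f A u) :
    tcone (gph F) (mk2 (f u) (u - f u)) = rgeBIB A :=
  (tcone_gph_subset_rgeBIB hW hgraph hu hf).antisymm (rgeBIB_subset_tcone_gph hU hgraph hu hf)

lemma scdAt_of_eq_graph (hU : IsOpen U) (hW : IsOpen W) (hf : LipschitzOnWith 1 f U)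
    (hgraph : gph F ∩ W = {w | fst2 w + snd2 w ∈ U ∧ fst2 w = f (fst2 w + snd2 w)})
    {z : E2 n} (hz : z ∈ gph F ∩ W) : SCDAt F z := by
  rw [hgraph] at hz
  obtain ⟨uk, huk, hlim⟩ := exists_seq_differentiableAt hU hf hz.1
  have hAk : ∀ k, fderiv ℝ f (uk k) ∈ closedBall 0 1 := fun k => mem_closedBall_zero_iff.2
    ((huk k).2.hasFDerivAt.le_of_lipschitzOn (hU.mem_nhds (huk k).1) hf)
  obtain ⟨A, -, φ, hφ, hA⟩ := (isCompact_closedBall _ _).tendsto_subseq hAk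
  have hfu := ((hf.continuousOn.continuousAt (hU.mem_nhds hz.1)).tendsto.comp hlim)
  have hz' : mk2 (f (fst2 z + snd2 z)) (fst2 z + snd2 z - f (fst2 z + snd2 z)) = z :=
    mk2_ext (by rw [fst2_mk2, ← hz.2]) (by rw [snd2_mk2, ← hz.2]; abel)
  have hzk : Tendsto (fun k => mk2 (f (uk k)) (uk k - f (uk k))) atTop (𝓝 z) :=
    hz' ▸ tendsto_mk2 hfu (hlim.sub hfu)
  refine ⟨rgeBIB A, finrank_rgeBIB A, fun k => mk2 (f (uk (φ k))) (uk (φ k) - f (uk (φ k))),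
    fun k => rgeBIB (fderiv ℝ f (uk (φ k))), fun k => ⟨(mk2_mem_gph_of_eq hgraph (huk _).1).1,
      finrank_rgeBIB _, (tcone_gph_eq_rgeBIB hU hW hgraph (huk _).1 (huk _).2.hasFDerivAt).symm⟩,
    hzk.comp hφ.tendsto_atTop, tendsto_dZ_rgeBIB hA⟩

def phiEquiv (n : ℕ) : E2 n ≃L[ℝ] E2 n where
  toFun z := mk2 (fst2 z + snd2 z) (fst2 z)
  invFun z := mk2 (snd2 z) (fst2 z - snd2 z)
  map_add' z w := mk2_ext (by simp only [fst2_mk2, fst2_add, snd2_add]; abel) rfl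
  map_smul' c z := mk2_ext (by simp only [fst2_mk2, fst2_smul, snd2_smul, smul_add]; rfl) rfl
  left_inv z := mk2_ext rfl (by simp)
  right_inv z := mk2_ext (by simp) rfl
  continuous_toFun :=
    continuous_mk2.comp ((continuous_fst2.add continuous_snd2).prodMk continuous_fst2)
  continuous_invFun :=
    continuous_mk2.comp (continuous_snd2.prodMk (continuous_fst2.sub continuous_snd2))

lemma phiEquiv_symm_apply (z : E2 n) :
    (phiEquiv n).symm z = mk2 (snd2 z) (fst2 z - snd2 z) := rfl

lemma graphLipAt_of_eq_graph {zb : E2 n} {K : ℝ≥0} (hU : IsOpen U) (hW : IsOpen W) (hzb : zb ∈ W)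
    (hf : LipschitzOnWith K f U)
    (hgraph : gph F ∩ W = {w | fst2 w + snd2 w ∈ U ∧ fst2 w = f (fst2 w + snd2 w)}) :
    GraphLipAt F zb (fun z => mk2 (fst2 z + snd2 z) (fst2 z)) := by
  refine ⟨(phiEquiv n).symm, W, U, f, K, ?_⟩
  change GraphLipWith F zb (phiEquiv n) _ W U f K
  refine ⟨hW, hzb, (phiEquiv n).contDiff.contDiffOn, (phiEquiv n).injective.injOn,
    (phiEquiv n).isOpenMap W hW, (phiEquiv n).symm.contDiff.contDiffOn,
    fun z _ => (phiEquiv n).symm_apply_apply z, hU, hf, ?_⟩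
  rw [ContinuousLinearEquiv.image_eq_preimage_symm, hgraph]
  ext w
  simp [phiEquiv_symm_apply]

end LipschitzGraph

lemma exists_firmNonexp_eq_rgeBIB_of_mem_Sp {F : E n → Set (E n)} {W : Set (E2 n)} (hW : IsOpen W)
    (hmono : IsMonoSet (gph F ∩ W)) {z : E2 n} (hz : z ∈ W) {L : Submodule ℝ (E2 n)}
    (hL : L ∈ Sp F z) : ∃ B, FirmNonexp B ∧ L = rgeBIB B := by
  obtain ⟨hrank, zk, Lk, hzkL, hzk, hd⟩ := hL
  refine exists_firmNonexp_eq_rgeBIB hrank (coe_subset_of_tendsto_dZ hd isClosed_monoCone ?_)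
  filter_upwards [hzk.eventually (hW.mem_nhds hz)] with k hk
  rw [(hzkL k).2.2, ← tcone_inter_open hW hk]
  exact tcone_subset_monoCone hmono ⟨(hzkL k).1, hk⟩

theorem stmt10 (n : ℕ) (F : E n → Set (E n)) (zb : E2 n) (hzb : zb ∈ gph F)
    (hmono : LocMaxMonoAt F zb) :
    GraphLipAt F zb (fun z => mk2 (fst2 z + snd2 z) (fst2 z)) ∧
    SCDAround F zb ∧
    ∃ δ > (0 : ℝ), ∀ z ∈ gph F, dist z zb < δ → ∀ L ∈ Sp F z,
      ∃ B : E n →L[ℝ] E n, FirmNonexp B ∧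
        (L : Set (E2 n)) = {w | ∃ p : E n, w = mk2 (B p) (p - B p)} ∧
        (adjS L : Set (E2 n)) = {w | ∃ p : E n,
          w = mk2 (ContinuousLinearMap.adjoint B p) (p - ContinuousLinearMap.adjoint B p)} := by
  obtain ⟨U, W, f, hU, hW, hzbW, hf, hWmono, hgraph⟩ := exists_lipschitz_localization hzb hmono
  obtain ⟨δ, hδ, hball⟩ := Metric.isOpen_iff.1 hW zb hzbW
  have hnear : ∀ z, dist z zb < δ → z ∈ W := fun z hz => hball (mem_ball.2 hz)
  refine ⟨graphLipAt_of_eq_graph hU hW hzbW hf hgraph,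
    ⟨δ, hδ, fun z hz hzδ => scdAt_of_eq_graph hU hW hf hgraph ⟨hz, hnear z hzδ⟩⟩,
    δ, hδ, fun z _ hzδ L hL => ?_⟩
  obtain ⟨B, hB, rfl⟩ := exists_firmNonexp_eq_rgeBIB_of_mem_Sp hW hWmono (hnear z hzδ) hL
  exact ⟨B, hB, coe_rgeBIB B, by rw [adjS_rgeBIB, coe_rgeBIB]⟩

end SCD
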